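/- arXiv:2005.00178 — 2 statements merged into one kernel-verified Lean document; each statement's English description precedes it below -/
import Mathlib

section
/- Let ℓ : ℝ × ℝ → ℝ₊ be convex in its first argument, G a compact group with Haar probability measure λ acting on X, f : X → ℝ measurable with f(g·x) integrable in g, and f°(x) = ∫_G f(gx) λ(dg). Then for each data point (x,y), E_{g∼λ}[ℓ(f(gx),y)] ≥ ℓ(f°(x),y); hence the augmented empirical risk of f is at least the empirical risk of f°. -/
open MeasureTheory

theorem ConvexOn.map_integral_le_of_univ {α E : Type*} [MeasurableSpace α] {μ : Measure α}
    [IsProbabilityMeasure μ] [NormedAddCommGroup E] [NormedSpace ℝ E] [FiniteDimensional ℝ E]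
    {φ : E → ℝ} (hφ : ConvexOn ℝ Set.univ φ) {f : α → E} (hf : Integrable f μ)
    (hφf : Integrable (φ ∘ f) μ) :
    φ (∫ a, f a ∂μ) ≤ ∫ a, φ (f a) ∂μ :=
  hφ.map_integral_le hφ.locallyLipschitz.continuous.continuousOn isClosed_univ
    (Filter.Eventually.of_forall fun _ => Set.mem_univ _) hf hφf

theorem loss_symmetrization_le_general {G X : Type*}
    [Group G] [MeasurableSpace G] [MulAction G X]
    (lam : Measure G) [IsProbabilityMeasure lam]
    (ℓ : ℝ → ℝ → ℝ) (hconv : ∀ y, ConvexOn ℝ Set.univ fun z => ℓ z y)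
    (f : X → ℝ) (hfint : ∀ x, Integrable (fun g => f (g • x)) lam)
    (hℓint : ∀ x y, Integrable (fun g => ℓ (f (g • x)) y) lam) :
    (∀ x y, ℓ (∫ g, f (g • x) ∂lam) y ≤ ∫ g, ℓ (f (g • x)) y ∂lam) ∧
    ∀ (n : ℕ) (D : Fin n → X × ℝ),
      ((1 : ℝ) / n) * ∑ i : Fin n, ℓ (∫ g, f (g • (D i).1) ∂lam) ((D i).2)
        ≤ ((1 : ℝ) / n) * ∑ i : Fin n, ∫ g, ℓ (f (g • (D i).1)) ((D i).2) ∂lam := by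
  have jensen : ∀ x y, ℓ (∫ g, f (g • x) ∂lam) y ≤ ∫ g, ℓ (f (g • x)) y ∂lam := fun x y =>
    (hconv y).map_integral_le_of_univ (hfint x) (hℓint x y)
  refine ⟨jensen, fun n D => ?_⟩
  gcongr with i
  exact jensen (D i).1 (D i).2

/-- Jensen's inequality for feature averaging: with `ℓ` convex in its first argument and
`f°(x) = ∫ f(g•x) dλ(g)`, we have `ℓ(f°(x), y) ≤ ∫ ℓ(f(g•x), y) dλ(g)` pointwise, and hence the
empirical risk of `f°` is at most the augmented empirical risk of `f`. -/
theorem loss_symmetrization_le {G X : Type*}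
    [Group G] [TopologicalSpace G] [IsTopologicalGroup G] [CompactSpace G]
    [MeasurableSpace G] [BorelSpace G]
    [MeasurableSpace X] [MulAction G X] [MeasurableSMul G X]
    (lam : Measure G) [lam.IsHaarMeasure] [IsProbabilityMeasure lam]
    (ℓ : ℝ → ℝ → ℝ) (hℓpos : ∀ z y, 0 ≤ ℓ z y)
    (hconv : ∀ y, ConvexOn ℝ Set.univ fun z => ℓ z y)
    (f : X → ℝ) (hf : Measurable f)
    (hfint : ∀ x, Integrable (fun g => f (g • x)) lam)
    (hℓint : ∀ x y, Integrable (fun g => ℓ (f (g • x)) y) lam) :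
    (∀ x y, ℓ (∫ g, f (g • x) ∂lam) y ≤ ∫ g, ℓ (f (g • x)) y ∂lam) ∧
    ∀ (n : ℕ) (D : Fin n → X × ℝ),
      ((1 : ℝ) / n) * ∑ i : Fin n, ℓ (∫ g, f (g • (D i).1) ∂lam) ((D i).2)
        ≤ ((1 : ℝ) / n) * ∑ i : Fin n, ∫ g, ℓ (f (g • (D i).1)) ((D i).2) ∂lam :=
  loss_symmetrization_le_general lam ℓ hconv f hfint hℓint
end

section
/- Let G be a compact group with a linear representation ρ : G → GL(V) on a finite-dimensional real vector space V, let the data set (Xᵢ,Yᵢ)ᵢ₌₁ⁿ span V, and let ℓ be strictly convex in its first argument. Then the unique minimizer ŵ of the augmented risk w ↦ (1/n)Σᵢ E_{g∼λ}[ℓ(wᵀρ_g Xᵢ, Yᵢ)] satisfies ρ*_g ŵ = ŵ for λ-almost all g ∈ G, so the linear predictor f_ŵ(x) = ŵᵀx is G-invariant. -/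
/-!
Left invariance of the Haar measure makes the augmented risk invariant under `w ↦ (ρ_h)ᵀ w` for
every `h`: substituting `g ↦ h g` turns `⟪(ρ_h)ᵀ w, ρ_g x⟫ = ⟪w, ρ_{hg} x⟫` back into `⟪w, ρ_g x⟫`.
A strict minimizer is therefore fixed by every `(ρ_h)ᵀ`, which says `⟪ŵ, ρ_h x⟫ = ⟪ŵ, x⟫`.
-/

open MeasureTheory

section AugmentedRisk

variable {G V : Type*} [Group G] [MeasurableSpace G]
  [NormedAddCommGroup V] [InnerProductSpace ℝ V]
  (μ : Measure G) (ρ : G →* (V ≃ₗ[ℝ] V))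

noncomputable def augmentedRisk {n : ℕ} (Xd : Fin n → V) (Yd : Fin n → ℝ) (ℓ : ℝ → ℝ → ℝ)
    (w : V) : ℝ :=
  ((1 : ℝ) / n) * ∑ i : Fin n, ∫ g, ℓ (inner ℝ w (ρ g (Xd i)) : ℝ) (Yd i) ∂μ

variable [MeasurableMul G] [μ.IsMulLeftInvariant] [FiniteDimensional ℝ V]

theorem integral_comp_inner_adjoint_apply (F : ℝ → ℝ) (h : G) (w x : V) :
    ∫ g, F (inner ℝ (LinearMap.adjoint (ρ h).toLinearMap w) (ρ g x)) ∂μ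
      = ∫ g, F (inner ℝ w (ρ g x)) ∂μ := by
  have hshift : ∀ g,
      inner ℝ (LinearMap.adjoint (ρ h).toLinearMap w) (ρ g x) = inner ℝ w (ρ (h * g) x) :=
    fun g => by rw [LinearMap.adjoint_inner_left, map_mul, LinearEquiv.mul_apply]; rfl
  simp_rw [hshift]
  exact integral_mul_left_eq_self (fun g => F (inner ℝ w (ρ g x))) h

theorem augmentedRisk_adjoint_apply {n : ℕ} (Xd : Fin n → V) (Yd : Fin n → ℝ)
    (ℓ : ℝ → ℝ → ℝ) (h : G) (w : V) :
    augmentedRisk μ ρ Xd Yd ℓ (LinearMap.adjoint (ρ h).toLinearMap w)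
      = augmentedRisk μ ρ Xd Yd ℓ w := by
  unfold augmentedRisk
  congr 1
  exact Finset.sum_congr rfl fun i _ =>
    integral_comp_inner_adjoint_apply μ ρ (fun z => ℓ z (Yd i)) h w (Xd i)

end AugmentedRisk

theorem augmented_risk_minimizer_invariant_general {G V : Type*}
    [Group G] [TopologicalSpace G] [IsTopologicalGroup G]
    [MeasurableSpace G] [BorelSpace G]
    [NormedAddCommGroup V] [InnerProductSpace ℝ V] [FiniteDimensional ℝ V]
    (lam : Measure G) [lam.IsHaarMeasure]
    (ρ : G →* (V ≃ₗ[ℝ] V))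
    (n : ℕ) (Xd : Fin n → V) (Yd : Fin n → ℝ)
    (ℓ : ℝ → ℝ → ℝ)
    (wHat : V)
    (hmin : ∀ w : V, w ≠ wHat →
      ((1 : ℝ) / n) * ∑ i : Fin n, ∫ g, ℓ (inner ℝ wHat (ρ g (Xd i)) : ℝ) (Yd i) ∂lam
        < ((1 : ℝ) / n) * ∑ i : Fin n, ∫ g, ℓ (inner ℝ w (ρ g (Xd i)) : ℝ) (Yd i) ∂lam) :
    ∀ᵐ g ∂lam, ∀ x : V, (inner ℝ wHat (ρ g x) : ℝ) = inner ℝ wHat x := by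
  have hfixed : ∀ h : G, LinearMap.adjoint (ρ h).toLinearMap wHat = wHat := fun h => by
    by_contra hne
    exact (hmin _ hne).ne' (augmentedRisk_adjoint_apply lam ρ Xd Yd ℓ h wHat)
  refine ae_of_all _ fun h x => ?_
  calc inner ℝ wHat (ρ h x) = inner ℝ (LinearMap.adjoint (ρ h).toLinearMap wHat) x :=
        (LinearMap.adjoint_inner_left _ x wHat).symm
    _ = inner ℝ wHat x := by rw [hfixed h]

/-- For a compact group `G` with a linear representation `ρ` on a finite-dimensional real inner
product space `V`, data spanning `V`, and a loss strictly convex in its first argument, the unique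
minimizer `ŵ` of the augmented risk satisfies `ρ*_g ŵ = ŵ` for `λ`-almost all `g`, i.e.
`⟪ŵ, ρ_g x⟫ = ⟪ŵ, x⟫` for all `x`; the linear predictor `x ↦ ⟪ŵ, x⟫` is `G`-invariant. -/
theorem augmented_risk_minimizer_invariant {G V : Type*}
    [Group G] [TopologicalSpace G] [IsTopologicalGroup G] [CompactSpace G]
    [MeasurableSpace G] [BorelSpace G]
    [NormedAddCommGroup V] [InnerProductSpace ℝ V] [FiniteDimensional ℝ V]
    (lam : Measure G) [lam.IsHaarMeasure] [IsProbabilityMeasure lam]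
    (ρ : G →* (V ≃ₗ[ℝ] V))
    (n : ℕ) (Xd : Fin n → V) (Yd : Fin n → ℝ)
    (hspan : Submodule.span ℝ (Set.range Xd) = ⊤)
    (ℓ : ℝ → ℝ → ℝ)
    (hconv : ∀ y, StrictConvexOn ℝ Set.univ fun z => ℓ z y)
    (wHat : V)
    (hmin : ∀ w : V, w ≠ wHat →
      ((1 : ℝ) / n) * ∑ i : Fin n, ∫ g, ℓ (inner ℝ wHat (ρ g (Xd i)) : ℝ) (Yd i) ∂lam
        < ((1 : ℝ) / n) * ∑ i : Fin n, ∫ g, ℓ (inner ℝ w (ρ g (Xd i)) : ℝ) (Yd i) ∂lam) :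
    ∀ᵐ g ∂lam, ∀ x : V, (inner ℝ wHat (ρ g x) : ℝ) = inner ℝ wHat x :=
  augmented_risk_minimizer_invariant_general lam ρ n Xd Yd ℓ wHat hmin
end
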